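/- arXiv:2206.07760 — 2 statements merged into one kernel-verified Lean document; each statement's English description precedes it below -/
import Mathlib

section
/- The continuous Markov stability of any partition at any time t ≥ 0 satisfies -1/2 < r_cont({C_i}, t) ≤ 1, where r_cont({C_i}, t) = Σ_{u,v} π_u (P(t)_{uv} - π_v) δ(c_u, c_v). -/
/-!
The heat kernel `P(t) = exp(-t L_rw)` is row-stochastic (`L_rw 1 = 0`), entrywise nonnegative for
`t ≥ 0` (`-t L_rw` has nonnegative off-diagonal entries) and reversible with respect to `π`
(`diag π · L_rw` is a multiple of the symmetric Laplacian `diag(deg) - A`). Nonnegativity and row sums give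
`r ≤ Σ_u π_u Σ_v P_uv = 1`. For the lower bound, write `r` as a sum over communities of
`yᵀ diag(π) P y - (πᵀ y)²` with `y` the indicator of a community. Splitting `P(t) = R R` with
`R = P(t/2)`, reversibility turns the first term into `Σ_w π_w (R y)_w²`, and stationarity
`πᵀ R = πᵀ` turns the second into `(Σ_w π_w (R y)_w)²`; Cauchy–Schwarz gives `r ≥ 0 > -1/2`.
-/

open Matrix NormedSpace

namespace Matrix

variable {ι : Type*} [Fintype ι]

section

variable [DecidableEq ι]

theorem exp_mul_eq_self_of_mul_eq_zero {M X : Matrix ι ι ℝ} (h : M * X = 0) :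
    exp M * X = X := by
  have hX : SemiconjBy X 0 M := by simp [SemiconjBy, h]
  open scoped Norms.Operator in
  have hexp := hX.exp_right
  rw [SemiconjBy, exp_zero, mul_one] at hexp
  exact hexp.symm

theorem exp_mulVec_eq_self_of_mulVec_eq_zero {M : Matrix ι ι ℝ} {v : ι → ℝ}
    (h : M *ᵥ v = 0) : exp M *ᵥ v = v := by
  have hX : M * of (fun i (_ : ι) => v i) = 0 := by
    ext i j
    simpa [mulVec, dotProduct, mul_apply] using congrFun h i
  funext i
  simpa [mulVec, dotProduct, mul_apply] using
    congrFun₂ (exp_mul_eq_self_of_mul_eq_zero hX) i i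

theorem exp_smul_one (r : ℝ) : exp (r • (1 : Matrix ι ι ℝ)) = Real.exp r • 1 := by
  rw [← Algebra.algebraMap_eq_smul_one, ← Algebra.algebraMap_eq_smul_one, Real.exp_eq_exp_ℝ]
  open scoped Norms.Operator in exact (algebraMap_exp_comm r).symm

theorem exp_apply_nonneg_of_nonneg {M : Matrix ι ι ℝ} (h : ∀ i j, 0 ≤ M i j) (i j : ι) :
    0 ≤ exp M i j := by
  open scoped Norms.Operator in
  have hsum := exp_series_hasSum_exp' (𝕂 := ℝ) M
  exact (Pi.hasSum.1 (Pi.hasSum.1 hsum i) j).nonneg fun n =>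
    mul_nonneg (by positivity) (pow_apply_nonneg h n i j)

theorem exp_apply_nonneg_of_offDiag_nonneg {M : Matrix ι ι ℝ}
    (h : ∀ i j, i ≠ j → 0 ≤ M i j) (i j : ι) : 0 ≤ exp M i j := by
  -- shifting by `r • 1` makes every entry nonnegative and only rescales `exp M` by `e^r`
  set r := ∑ k, |M k k|
  have hshift : ∀ k l, 0 ≤ (M + r • 1) k l := by
    intro k l
    by_cases hkl : k = l
    · subst hkl
      have hr : |M k k| ≤ r :=
        Finset.single_le_sum (f := fun k => |M k k|) (fun _ _ => abs_nonneg _) (Finset.mem_univ k)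
      simp only [add_apply, smul_apply, one_apply_eq, smul_eq_mul, mul_one]
      linarith [neg_abs_le (M k k)]
    · simpa [one_apply, hkl] using h k l hkl
  have hM : M = (M + r • 1) + (-r) • 1 := by rw [neg_smul]; abel
  rw [hM, exp_add_of_commute _ _ ((Commute.one_right _).smul_right _), exp_smul_one,
    mul_smul_comm, mul_one, smul_apply, smul_eq_mul]
  exact mul_nonneg (Real.exp_pos _).le (exp_apply_nonneg_of_nonneg hshift i j)

/-- Detailed balance `π_u R_uv = π_v R_vu`. -/
def IsReversible (π : ι → ℝ) (R : Matrix ι ι ℝ) : Prop :=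
  diagonal π * R = Rᵀ * diagonal π

theorem isReversible_of_isSymm {π : ι → ℝ} {M : Matrix ι ι ℝ} (h : (diagonal π * M).IsSymm) :
    IsReversible π M := by
  rw [IsReversible, ← h.eq, transpose_mul, diagonal_transpose]

theorem IsReversible.exp {π : ι → ℝ} {M : Matrix ι ι ℝ} (h : IsReversible π M) :
    IsReversible π (exp M) := by
  have hM : SemiconjBy (diagonal π) M Mᵀ := h
  rw [IsReversible, ← exp_transpose]
  open scoped Norms.Operator in exact hM.exp_right

section Reversible

variable {π : ι → ℝ} {R : Matrix ι ι ℝ}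

theorem IsReversible.vecMul_eq_self (h : IsReversible π R) (hR : R *ᵥ 1 = 1) : π ᵥ* R = π := by
  have hπ : (1 : ι → ℝ) ᵥ* diagonal π = π := by ext u; simp [vecMul_diagonal]
  rw [← hπ, vecMul_vecMul, h, ← vecMul_vecMul, vecMul_transpose, hR]

theorem IsReversible.dotProduct_mul_self_mulVec (h : IsReversible π R) (y : ι → ℝ) :
    y ⬝ᵥ (diagonal π * (R * R)) *ᵥ y = ∑ w, π w * (R *ᵥ y) w ^ 2 := by
  rw [← Matrix.mul_assoc, h, ← mulVec_mulVec, ← mulVec_mulVec, dotProduct_mulVec,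
    vecMul_transpose]
  simp only [dotProduct, mulVec_diagonal]
  exact Finset.sum_congr rfl fun w _ => by ring

theorem IsReversible.sq_dotProduct_le (h : IsReversible π R) (hR : R *ᵥ 1 = 1)
    (hπ : ∀ u, 0 ≤ π u) (hπ1 : ∑ u, π u ≤ 1) (y : ι → ℝ) :
    (π ⬝ᵥ y) ^ 2 ≤ y ⬝ᵥ (diagonal π * (R * R)) *ᵥ y := by
  set z := R *ᵥ y
  have hstat : π ⬝ᵥ y = ∑ w, π w * z w :=
    calc π ⬝ᵥ y = (π ᵥ* R) ⬝ᵥ y := by rw [h.vecMul_eq_self hR]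
      _ = π ⬝ᵥ z := (dotProduct_mulVec π R y).symm
  have hcs : (∑ w, π w * z w) ^ 2 ≤ (∑ w, π w) * ∑ w, π w * z w ^ 2 :=
    Finset.sum_sq_le_sum_mul_sum_of_sq_le_mul _ (fun w _ => hπ w)
      (fun w _ => mul_nonneg (hπ w) (sq_nonneg _)) fun w _ =>
        (by ring : (π w * z w) ^ 2 = π w * (π w * z w ^ 2)).le
  have hvar : 0 ≤ ∑ w, π w * z w ^ 2 :=
    Finset.sum_nonneg fun w _ => mul_nonneg (hπ w) (sq_nonneg _)
  rw [hstat, h.dotProduct_mul_self_mulVec]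
  exact hcs.trans (mul_le_of_le_one_left hvar hπ1)

end Reversible

end

variable (A : Matrix ι ι ℝ)

noncomputable def stationaryDist (u : ι) : ℝ :=
  (∑ w, A u w) / ∑ x, ∑ w, A x w

variable {A} in
theorem stationaryDist_nonneg (hA : ∀ u v, 0 ≤ A u v) (u : ι) : 0 ≤ stationaryDist A u :=
  div_nonneg (Finset.sum_nonneg fun w _ => hA u w)
    (Finset.sum_nonneg fun x _ => Finset.sum_nonneg fun w _ => hA x w)

theorem sum_stationaryDist_le_one : ∑ u, stationaryDist A u ≤ 1 := by
  simp only [stationaryDist, ← Finset.sum_div]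
  exact div_self_le_one _

variable [DecidableEq ι]

noncomputable def randomWalkLaplacian : Matrix ι ι ℝ :=
  diagonal (fun x => (∑ w, A x w)⁻¹) * (diagonal (fun x => ∑ w, A x w) - A)

noncomputable def heatKernel (t : ℝ) : Matrix ι ι ℝ :=
  exp (-(t • randomWalkLaplacian A))

theorem randomWalkLaplacian_mulVec_one : randomWalkLaplacian A *ᵥ 1 = 0 := by
  have hdeg : diagonal (fun x => ∑ w, A x w) *ᵥ 1 = A *ᵥ 1 := by
    ext u
    rw [mulVec_diagonal]
    simp [mulVec, dotProduct]
  rw [randomWalkLaplacian, ← mulVec_mulVec, sub_mulVec, hdeg, sub_self, mulVec_zero]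

theorem heatKernel_mulVec_one (t : ℝ) : heatKernel A t *ᵥ 1 = 1 :=
  exp_mulVec_eq_self_of_mulVec_eq_zero <| by
    rw [neg_mulVec, smul_mulVec, randomWalkLaplacian_mulVec_one, smul_zero, neg_zero]

theorem heatKernel_add (s t : ℝ) : heatKernel A (s + t) = heatKernel A s * heatKernel A t := by
  have hcomm : Commute (-(s • randomWalkLaplacian A)) (-(t • randomWalkLaplacian A)) :=
    (((Commute.refl _).smul_left s).smul_right t).neg_left.neg_right
  rw [heatKernel, add_smul, neg_add, exp_add_of_commute _ _ hcomm]
  rfl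

variable {A}

theorem randomWalkLaplacian_apply_of_ne {u v : ι} (huv : u ≠ v) :
    randomWalkLaplacian A u v = -((∑ w, A u w)⁻¹ * A u v) := by
  simp [randomWalkLaplacian, diagonal_mul, huv]

theorem diagonal_stationaryDist_mul_randomWalkLaplacian (hdeg : ∀ v, ∑ w, A v w ≠ 0) :
    diagonal (stationaryDist A) * randomWalkLaplacian A =
      (∑ x, ∑ w, A x w)⁻¹ • (diagonal (fun x => ∑ w, A x w) - A) := by
  rw [randomWalkLaplacian, ← Matrix.mul_assoc, diagonal_mul_diagonal, ← smul_one_mul,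
    ← diagonal_one, ← diagonal_smul]
  congr 2
  ext u
  simp [stationaryDist, div_eq_inv_mul, hdeg u]

theorem isReversible_heatKernel (hsym : A.IsSymm) (hdeg : ∀ v, ∑ w, A v w ≠ 0) (t : ℝ) :
    IsReversible (stationaryDist A) (heatKernel A t) := by
  refine IsReversible.exp (isReversible_of_isSymm ?_)
  rw [mul_neg, mul_smul_comm, diagonal_stationaryDist_mul_randomWalkLaplacian hdeg]
  exact ((IsSymm.sub (isSymm_diagonal _) hsym).smul _).smul _ |>.neg

theorem heatKernel_apply_nonneg (hA : ∀ u v, 0 ≤ A u v) {t : ℝ} (ht : 0 ≤ t) (u v : ι) :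
    0 ≤ heatKernel A t u v := by
  refine exp_apply_nonneg_of_offDiag_nonneg (fun i j hij => ?_) u v
  rw [neg_apply, smul_apply, randomWalkLaplacian_apply_of_ne hij, smul_eq_mul, mul_neg, neg_neg]
  have hdeg : 0 ≤ ∑ w, A i w := Finset.sum_nonneg fun w _ => hA i w
  have hij := hA i j
  positivity

end Matrix

section MarkovStability

variable {ι κ : Type*} [DecidableEq κ]

noncomputable def markovStability [Fintype ι] (π : ι → ℝ) (P : Matrix ι ι ℝ) (c : ι → κ) : ℝ :=
  ∑ u, ∑ v, π u * (P u v - π v) * if c u = c v then 1 else 0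

def communityIndicator (c : ι → κ) (i : κ) (u : ι) : ℝ := if c u = i then 1 else 0

theorem sum_communityIndicator_mul [Fintype κ] (c : ι → κ) (u v : ι) :
    ∑ i, communityIndicator c i u * communityIndicator c i v = if c u = c v then 1 else 0 := by
  simp [communityIndicator, eq_comm]

variable [Fintype ι]

theorem markovStability_eq_sum_communities [DecidableEq ι] [Fintype κ] (π : ι → ℝ)
    (P : Matrix ι ι ℝ) (c : ι → κ) :
    markovStability π P c = ∑ i, (communityIndicator c i ⬝ᵥ (diagonal π * P) *ᵥ
      communityIndicator c i - (π ⬝ᵥ communityIndicator c i) ^ 2) := by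
  simp only [markovStability, dotProduct, mulVec, diagonal_mul, sq, Finset.sum_mul,
    Finset.mul_sum, ← Finset.sum_sub_distrib]
  conv_rhs => rw [Finset.sum_comm]
  refine Finset.sum_congr rfl fun u _ => ?_
  conv_rhs => rw [Finset.sum_comm]
  refine Finset.sum_congr rfl fun v _ => ?_
  rw [← sum_communityIndicator_mul, Finset.mul_sum]
  exact Finset.sum_congr rfl fun i _ => by ring

variable {π : ι → ℝ}

theorem markovStability_le_one {P : Matrix ι ι ℝ} (c : ι → κ) (hπ : ∀ u, 0 ≤ π u)
    (hπ1 : ∑ u, π u ≤ 1) (hP : ∀ u v, 0 ≤ P u v) (hP1 : P *ᵥ 1 = 1) :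
    markovStability π P c ≤ 1 := by
  have hrow : ∀ u, ∑ v, P u v = 1 := fun u => by
    simpa [mulVec, dotProduct] using congrFun hP1 u
  calc markovStability π P c ≤ ∑ u, ∑ v, π u * P u v := by
        refine Finset.sum_le_sum fun u _ => Finset.sum_le_sum fun v _ => ?_
        have hπP := mul_nonneg (hπ u) (hP u v)
        have hππ := mul_nonneg (hπ u) (hπ v)
        split_ifs <;> nlinarith
    _ = ∑ u, π u := by simp [← Finset.mul_sum, hrow]
    _ ≤ 1 := hπ1

theorem markovStability_mul_self_nonneg [DecidableEq ι] [Fintype κ] {R : Matrix ι ι ℝ}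
    (c : ι → κ) (hπ : ∀ u, 0 ≤ π u) (hπ1 : ∑ u, π u ≤ 1) (hrev : IsReversible π R)
    (hR : R *ᵥ 1 = 1) : 0 ≤ markovStability π (R * R) c := by
  rw [markovStability_eq_sum_communities]
  exact Finset.sum_nonneg fun i _ => sub_nonneg.2 (hrev.sq_dotProduct_le hR hπ hπ1 _)

end MarkovStability

theorem stmt14_general {n k : ℕ} (A : Matrix (Fin n) (Fin n) ℝ)
    (hsym : A.IsSymm) (hnonneg : ∀ u v, 0 ≤ A u v)
    (hdeg : ∀ v, 0 < ∑ u, A v u)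
    (c : Fin n → Fin k)
    (t : ℝ) (ht : 0 ≤ t) :
    -(1 / 2) <
      (∑ u, ∑ v, ((∑ w, A u w) / (∑ x, ∑ w, A x w)) *
        ((NormedSpace.exp
            (-(t • (Matrix.diagonal (fun x => (∑ w, A x w)⁻¹) *
              (Matrix.diagonal (fun x => ∑ w, A x w) - A))))) u v -
          (∑ w, A v w) / (∑ x, ∑ w, A x w)) *
        (if c u = c v then 1 else 0)) ∧
    (∑ u, ∑ v, ((∑ w, A u w) / (∑ x, ∑ w, A x w)) *
        ((NormedSpace.exp
            (-(t • (Matrix.diagonal (fun x => (∑ w, A x w)⁻¹) *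
              (Matrix.diagonal (fun x => ∑ w, A x w) - A))))) u v -
          (∑ w, A v w) / (∑ x, ∑ w, A x w)) *
        (if c u = c v then 1 else 0)) ≤ 1 := by
  change -(1 / 2) < markovStability (stationaryDist A) (heatKernel A t) c ∧
    markovStability (stationaryDist A) (heatKernel A t) c ≤ 1
  have hπ := stationaryDist_nonneg hnonneg
  have hπ1 := sum_stationaryDist_le_one A
  refine ⟨?_, markovStability_le_one c hπ hπ1 (heatKernel_apply_nonneg hnonneg ht)
    (heatKernel_mulVec_one A t)⟩
  have hrev := isReversible_heatKernel hsym (fun v => (hdeg v).ne') (t / 2)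
  rw [← add_halves t, heatKernel_add]
  exact (by norm_num : -(1 / 2 : ℝ) < 0).trans_le
    (markovStability_mul_self_nonneg c hπ hπ1 hrev (heatKernel_mulVec_one A _))

/-- The continuous Markov stability of any partition `{C_i}` (encoded by a surjective
community assignment `c : V → Fin k`) of a connected weighted graph at any time `t ≥ 0`
satisfies `-1/2 < r_cont({C_i}, t) ≤ 1`, where
`r_cont = Σ_{u,v} π_u (P(t)_{uv} - π_v) δ(c_u, c_v)`. -/
theorem stmt14 {n k : ℕ} (A : Matrix (Fin n) (Fin n) ℝ)
    (hsym : A.IsSymm) (hnonneg : ∀ u v, 0 ≤ A u v)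
    (hdeg : ∀ v, 0 < ∑ u, A v u)
    (hconn : ∀ u v : Fin n, Relation.ReflTransGen (fun x y => A x y ≠ 0) u v)
    (c : Fin n → Fin k) (hc : Function.Surjective c)
    (t : ℝ) (ht : 0 ≤ t) :
    -(1 / 2) <
      (∑ u, ∑ v, ((∑ w, A u w) / (∑ x, ∑ w, A x w)) *
        ((NormedSpace.exp
            (-(t • (Matrix.diagonal (fun x => (∑ w, A x w)⁻¹) *
              (Matrix.diagonal (fun x => ∑ w, A x w) - A))))) u v -
          (∑ w, A v w) / (∑ x, ∑ w, A x w)) *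
        (if c u = c v then 1 else 0)) ∧
    (∑ u, ∑ v, ((∑ w, A u w) / (∑ x, ∑ w, A x w)) *
        ((NormedSpace.exp
            (-(t • (Matrix.diagonal (fun x => (∑ w, A x w)⁻¹) *
              (Matrix.diagonal (fun x => ∑ w, A x w) - A))))) u v -
          (∑ w, A v w) / (∑ x, ∑ w, A x w)) *
        (if c u = c v then 1 else 0)) ≤ 1 :=
  stmt14_general A hsym hnonneg hdeg c t ht
end

section
/- Under the same hypotheses, the Kron reduction satisfies L_α 𝟏 = 0, where 𝟏 is the all-ones vector on α; i.e., the rows of the Kron-reduced Laplacian sum to zero. -/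
/-!
Kron reduction preserves kernel vectors: if `L x = 0`, the `αᶜ`-rows give
`x[αᶜ] = -L[αᶜ,αᶜ]⁻¹ L[αᶜ,α] x[α]`, and substituting this into the `α`-rows gives
`L_α x[α] = 0`. A combinatorial Laplacian annihilates `𝟏`.
-/

open Matrix BigOperators

/-- The Kron reduction (Schur complement) of a matrix `L` with respect to a set `α`
of indices: `L_α = L[α,α] - L[α,α^c] L[α^c,α^c]⁻¹ L[α^c,α]`. -/
noncomputable def kron17 {n : ℕ} (L : Matrix (Fin n) (Fin n) ℝ) (α : Finset (Fin n)) :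
    Matrix {x // x ∈ α} {x // x ∈ α} ℝ :=
  L.submatrix (Subtype.val : {x // x ∈ α} → Fin n) Subtype.val -
    L.submatrix (Subtype.val : {x // x ∈ α} → Fin n) (Subtype.val : {x // x ∈ αᶜ} → Fin n) *
      (L.submatrix (Subtype.val : {x // x ∈ αᶜ} → Fin n) (Subtype.val : {x // x ∈ αᶜ} → Fin n))⁻¹ *
      L.submatrix (Subtype.val : {x // x ∈ αᶜ} → Fin n) (Subtype.val : {x // x ∈ α} → Fin n)

theorem Matrix.submatrix_mulVec_add_submatrix_compl_mulVec {ι κ μ R : Type*} [Fintype κ]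
    [DecidableEq κ] [NonUnitalNonAssocSemiring R] (M : Matrix ι κ R) (r : μ → ι) (s : Finset κ)
    (x : κ → R) :
    M.submatrix r (Subtype.val : {j // j ∈ s} → κ) *ᵥ (x ∘ Subtype.val) +
        M.submatrix r (Subtype.val : {j // j ∈ sᶜ} → κ) *ᵥ (x ∘ Subtype.val) =
      (M *ᵥ x) ∘ r := by
  funext i
  simp only [Pi.add_apply, Function.comp_apply, mulVec, dotProduct, submatrix_apply]
  rw [Finset.sum_coe_sort s (fun j => M (r i) j * x j),
    Finset.sum_coe_sort sᶜ (fun j => M (r i) j * x j), Finset.sum_add_sum_compl]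

theorem kron17_mulVec_eq_zero {n : ℕ} (L : Matrix (Fin n) (Fin n) ℝ) (α : Finset (Fin n))
    (hinv : IsUnit (L.submatrix (Subtype.val : {x // x ∈ αᶜ} → Fin n)
      (Subtype.val : {x // x ∈ αᶜ} → Fin n)).det)
    (x : Fin n → ℝ) (hx : L *ᵥ x = 0) :
    kron17 L α *ᵥ (x ∘ Subtype.val) = 0 := by
  have hα := L.submatrix_mulVec_add_submatrix_compl_mulVec
    (Subtype.val : {x // x ∈ α} → Fin n) α x
  have hαc := L.submatrix_mulVec_add_submatrix_compl_mulVec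
    (Subtype.val : {x // x ∈ αᶜ} → Fin n) α x
  rw [hx, Pi.zero_comp, add_eq_zero_iff_eq_neg] at hα hαc
  have hcompl : (L.submatrix (Subtype.val : {x // x ∈ αᶜ} → Fin n) Subtype.val)⁻¹ *ᵥ
      (L.submatrix (Subtype.val : {x // x ∈ αᶜ} → Fin n) (Subtype.val : {x // x ∈ α} → Fin n) *ᵥ
        (x ∘ Subtype.val)) = -(x ∘ Subtype.val) := by
    rw [hαc, mulVec_neg, mulVec_mulVec, nonsing_inv_mul _ hinv, one_mulVec]
  rw [kron17, sub_mulVec, Matrix.mul_assoc, ← mulVec_mulVec, ← mulVec_mulVec, hcompl,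
    mulVec_neg, hα, sub_neg_eq_add, neg_add_cancel]

theorem Matrix.diagonal_rowSum_sub_mulVec_one {ι R : Type*} [Fintype ι] [DecidableEq ι]
    [NonAssocRing R] (A : Matrix ι ι R) :
    (diagonal (fun v => ∑ u, A v u) - A) *ᵥ (fun _ => 1) = 0 := by
  funext v
  rw [sub_mulVec, Pi.sub_apply, mulVec_diagonal, mul_one, Pi.zero_apply, sub_eq_zero]
  simp [mulVec, dotProduct]

theorem stmt17_general {n : ℕ} (A : Matrix (Fin n) (Fin n) ℝ)
    (α : Finset (Fin n))
    (hinv : IsUnit ((Matrix.diagonal (fun v => ∑ u, A v u) - A).submatrix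
        (Subtype.val : {x // x ∈ αᶜ} → Fin n) (Subtype.val : {x // x ∈ αᶜ} → Fin n)).det) :
    kron17 (Matrix.diagonal (fun v => ∑ u, A v u) - A) α *ᵥ (fun _ => (1 : ℝ)) = 0 :=
  kron17_mulVec_eq_zero _ α hinv _ A.diagonal_rowSum_sub_mulVec_one

/-- The Kron reduction of the combinatorial Laplacian of a weighted graph with respect to
a nonempty proper subset `α` with invertible block `L[α^c,α^c]` annihilates the all-ones
vector: its rows sum to zero. -/
theorem stmt17 {n : ℕ} (A : Matrix (Fin n) (Fin n) ℝ)
    (hsym : A.IsSymm) (hnonneg : ∀ u v, 0 ≤ A u v)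
    (α : Finset (Fin n)) (hne : α.Nonempty) (hprop : α ≠ Finset.univ)
    (hinv : IsUnit ((Matrix.diagonal (fun v => ∑ u, A v u) - A).submatrix
        (Subtype.val : {x // x ∈ αᶜ} → Fin n) (Subtype.val : {x // x ∈ αᶜ} → Fin n)).det) :
    kron17 (Matrix.diagonal (fun v => ∑ u, A v u) - A) α *ᵥ (fun _ => (1 : ℝ)) = 0 :=
  stmt17_general A α hinv
end
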